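/- arXiv:0810.1533 — 2 statements merged into one kernel-verified Lean document; each statement's English description precedes it below -/
import Mathlib

section
/- Fix n ≥ 1, a unit vector e ∈ R^n, a C^∞ function φ: R^n → [0,1] satisfying φ(z + t·e) = φ(z) for all t ∈ R and z ∈ R^n, and t ∈ R. Then the map s_t: R^n → R^n defined by s_t(z) = z + t·φ(z)·e is a C^∞ diffeomorphism of R^n whose Jacobian determinant equals 1 everywhere (i.e., s_t preserves Lebesgue measure). -/
open MeasureTheory Matrix

section aux

variable {n : ℕ}

-- smoothness
lemma aux_contDiff (e : EuclideanSpace ℝ (Fin n)) (φ : EuclideanSpace ℝ (Fin n) → ℝ)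
    (hφ : ContDiff ℝ (⊤ : ℕ∞) φ) (t : ℝ) :
    ContDiff ℝ (⊤ : ℕ∞) (fun z : EuclideanSpace ℝ (Fin n) => z + (t * φ z) • e) :=
  contDiff_id.add ((contDiff_const.mul hφ).smul contDiff_const)

-- derivative of φ in direction e is 0
lemma aux_fderiv_e (e : EuclideanSpace ℝ (Fin n)) (φ : EuclideanSpace ℝ (Fin n) → ℝ)
    (hφ : ContDiff ℝ (⊤ : ℕ∞) φ)
    (hinv : ∀ (z : EuclideanSpace ℝ (Fin n)) (t : ℝ), φ (z + t • e) = φ z)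
    (z : EuclideanSpace ℝ (Fin n)) :
    fderiv ℝ φ z e = 0 := by
  have h1 : HasDerivAt (fun s : ℝ => z + s • e) e 0 := by
    simpa using ((hasDerivAt_id (0:ℝ)).smul_const e).const_add z
  have h2 : HasDerivAt (fun s : ℝ => φ (z + s • e)) (fderiv ℝ φ z e) 0 := by
    have h0 : HasFDerivAt φ (fderiv ℝ φ z) (z + (0:ℝ) • e) := by
      simpa using (hφ.differentiable (by simp) z).hasFDerivAt
    exact h0.comp_hasDerivAt 0 h1
  have h3 : (fun s : ℝ => φ (z + s • e)) = fun _ => φ z := funext fun s => hinv z s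
  rw [h3] at h2
  simpa using h2.unique (hasDerivAt_const 0 (φ z))

-- exact derivative of the shear
lemma aux_hasFDerivAt (e : EuclideanSpace ℝ (Fin n)) (φ : EuclideanSpace ℝ (Fin n) → ℝ)
    (hφ : ContDiff ℝ (⊤ : ℕ∞) φ) (t : ℝ) (z : EuclideanSpace ℝ (Fin n)) :
    HasFDerivAt (fun z : EuclideanSpace ℝ (Fin n) => z + (t * φ z) • e)
      (ContinuousLinearMap.id ℝ (EuclideanSpace ℝ (Fin n))
        + (t • fderiv ℝ φ z).smulRight e) z :=
  (hasFDerivAt_id z).add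
    (((hφ.differentiable (by simp) z).hasFDerivAt.const_mul t).smul_const e)

-- determinant of identity plus rank one with D e = 0
lemma aux_det (e : EuclideanSpace ℝ (Fin n)) (D : EuclideanSpace ℝ (Fin n) →L[ℝ] ℝ)
    (hDe : D e = 0) :
    (ContinuousLinearMap.id ℝ (EuclideanSpace ℝ (Fin n)) + D.smulRight e).det = 1 := by
  classical
  set b := (EuclideanSpace.basisFun (Fin n) ℝ).toBasis with hb
  have key : LinearMap.toMatrix b b
      ((ContinuousLinearMap.id ℝ (EuclideanSpace ℝ (Fin n)) + D.smulRight e) :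
        EuclideanSpace ℝ (Fin n) →ₗ[ℝ] EuclideanSpace ℝ (Fin n))
      = 1 + Matrix.replicateCol (Fin 1) (fun i => e i) * Matrix.replicateRow (Fin 1) (fun j => D (b j)) := by
    ext i j
    simp [LinearMap.toMatrix_apply, Matrix.one_apply, Matrix.mul_apply, hb,
      OrthonormalBasis.coe_toBasis_repr_apply, EuclideanSpace.basisFun_repr,
      EuclideanSpace.basisFun_apply, EuclideanSpace.single_apply, mul_comm, eq_comm]
  have hdet := LinearMap.det_toMatrix b
    ((ContinuousLinearMap.id ℝ (EuclideanSpace ℝ (Fin n)) + D.smulRight e) :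
        EuclideanSpace ℝ (Fin n) →ₗ[ℝ] EuclideanSpace ℝ (Fin n))
  rw [ContinuousLinearMap.det, ContinuousLinearMap.coe_add, ← hdet, key]
  erw [Matrix.det_one_add_replicateCol_mul_replicateRow]
  have he' : (∑ j, (e j) • b j) = e := by
    have := b.sum_repr e
    simpa [hb, OrthonormalBasis.coe_toBasis_repr_apply, EuclideanSpace.basisFun_repr] using this
  have hsum : (fun j => D (b j)) ⬝ᵥ (fun i => e i) = D e := by
    simp only [dotProduct]
    conv_rhs => rw [← he']
    rw [map_sum]
    simp [mul_comm]
  rw [hsum, hDe, add_zero]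

end aux

theorem stmt7 (n : ℕ) (hn : 1 ≤ n) (e : EuclideanSpace ℝ (Fin n)) (he : ‖e‖ = 1)
    (φ : EuclideanSpace ℝ (Fin n) → ℝ) (hφ : ContDiff ℝ (⊤ : ℕ∞) φ)
    (hφ01 : ∀ z, φ z ∈ Set.Icc (0 : ℝ) 1)
    (hinv : ∀ (z : EuclideanSpace ℝ (Fin n)) (t : ℝ), φ (z + t • e) = φ z)
    (t : ℝ) :
    ContDiff ℝ (⊤ : ℕ∞) (fun z : EuclideanSpace ℝ (Fin n) => z + (t * φ z) • e) ∧
    Function.Bijective (fun z : EuclideanSpace ℝ (Fin n) => z + (t * φ z) • e) ∧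
    (∀ z, (fderiv ℝ (fun z : EuclideanSpace ℝ (Fin n) => z + (t * φ z) • e) z).det = 1) ∧
    MeasurePreserving (fun z : EuclideanSpace ℝ (Fin n) => z + (t * φ z) • e)
      volume volume := by
  set f := fun z : EuclideanSpace ℝ (Fin n) => z + (t * φ z) • e with hf
  set g := fun z : EuclideanSpace ℝ (Fin n) => z + ((-t) * φ z) • e with hg
  have hgf : Function.LeftInverse g f := by
    intro z
    show (z + (t * φ z) • e) + ((-t) * φ (z + (t * φ z) • e)) • e = z
    rw [hinv]
    rw [add_assoc, ← add_smul]
    module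
  have hfg : Function.LeftInverse f g := by
    intro z
    show (z + ((-t) * φ z) • e) + (t * φ (z + ((-t) * φ z) • e)) • e = z
    rw [hinv]
    rw [add_assoc, ← add_smul]
    module
  have hdet : ∀ z, (fderiv ℝ f z).det = 1 := by
    intro z
    rw [(aux_hasFDerivAt e φ hφ t z).fderiv]
    exact aux_det e _ (by simp [aux_fderiv_e e φ hφ hinv z])
  have hdetg : ∀ z, (ContinuousLinearMap.id ℝ (EuclideanSpace ℝ (Fin n))
      + ((-t) • fderiv ℝ φ z).smulRight e).det = 1 := fun z =>
    aux_det e _ (by simp [aux_fderiv_e e φ hφ hinv z])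
  have hfc : Continuous f := (aux_contDiff e φ hφ t).continuous
  refine ⟨aux_contDiff e φ hφ t, ⟨hgf.injective, hfg.surjective⟩, hdet, hfc.measurable, ?_⟩
  refine Measure.ext fun A hA => ?_
  rw [Measure.map_apply hfc.measurable hA]
  have hpre : f ⁻¹' A = g '' A := by
    ext x
    simp only [Set.mem_preimage, Set.mem_image]
    constructor
    · intro hx; exact ⟨f x, hx, hgf x⟩
    · rintro ⟨a, ha, rfl⟩; rwa [hfg a]
  rw [hpre]
  have hchange := lintegral_abs_det_fderiv_eq_addHaar_image (volume)
    (f' := fun z => ContinuousLinearMap.id ℝ (EuclideanSpace ℝ (Fin n))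
      + ((-t) • fderiv ℝ φ z).smulRight e) hA
    (fun x _ => (aux_hasFDerivAt e φ hφ (-t) x).hasFDerivWithinAt)
    (hfg.injective.injOn)
  rw [← hchange]
  simp only [hdetg, abs_one, ENNReal.ofReal_one]
  exact setLIntegral_one A
end

section
/- Let U ⊆ R^n be a proper nonempty open set. Define a dyadic n-cell to be a cube Π_k [2^{-t} a_k, 2^{-t}(a_k+1)] with t ∈ Z, a_k ∈ Z. Say an n-cell x is ε-small if its diameter (in the L^∞ metric) is at most ε and every dyadic n-cell of the same diameter intersecting x is contained in U; say x is ε-good if it is a maximal ε-small n-cell with respect to inclusion. Then the ε-good n-cells have pairwise disjoint interiors and their union equals U. -/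
open Metric

/- The metric on `Fin n → ℝ` is the sup (`L^∞`) metric. -/

/-- A dyadic `n`-cell in `ℝⁿ`. -/
def IsDyadicCell (n : ℕ) (x : Set (Fin n → ℝ)) : Prop :=
  ∃ (t : ℤ) (a : Fin n → ℤ),
    x = Set.univ.pi fun k => Set.Icc ((2 : ℝ) ^ (-t) * a k) ((2 : ℝ) ^ (-t) * (a k + 1))

/-- An `ε`-small cell for the open set `U`: a dyadic cell of diameter at most `ε`
such that every dyadic cell of the same diameter intersecting it lies in `U`. -/
def IsSmallCell {n : ℕ} (U : Set (Fin n → ℝ)) (ε : ℝ) (x : Set (Fin n → ℝ)) : Prop :=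
  IsDyadicCell n x ∧ Metric.diam x ≤ ε ∧
    ∀ y, IsDyadicCell n y → Metric.diam y = Metric.diam x → (x ∩ y).Nonempty → y ⊆ U

/-- An `ε`-good cell: a maximal `ε`-small cell with respect to inclusion. -/
def IsGoodCell {n : ℕ} (U : Set (Fin n → ℝ)) (ε : ℝ) (x : Set (Fin n → ℝ)) : Prop :=
  IsSmallCell U ε x ∧ ∀ y, IsSmallCell U ε y → x ⊆ y → y = x

/-!
A point `p ∈ U` lies in a dyadic cell of every scale `2⁻ᵗ`. Once `2 · 2⁻ᵗ` is less than the distance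
from `p` to the complement of `U`, every cell of that scale meeting such a cell stays in `U`, so
the cell is small; on the other hand a small cell has `2⁻ᵗ ≤ ε`. Hence there is a coarsest small
cell through `p`, and it is good. Dyadic cells whose interiors meet are nested, so by maximality
two good cells with a common interior point coincide.
-/

open Set

lemma Icc_mul_subset_Icc_mul_of_mem_Ioo {u : ℝ} (hu : 0 < u) {a c d : ℤ} {x : ℝ}
    (hx : x ∈ Ioo (u * a) (u * (a + 1))) (hx' : x ∈ Ioo (u * c) (u * d)) :
    Icc (u * a) (u * (a + 1)) ⊆ Icc (u * c) (u * d) := by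
  have hca : c < a + 1 := by exact_mod_cast lt_of_mul_lt_mul_left (hx'.1.trans hx.2) hu.le
  have had : a < d := by exact_mod_cast lt_of_mul_lt_mul_left (hx.1.trans hx'.2) hu.le
  exact Icc_subset_Icc (by gcongr; exact_mod_cast (by omega : c ≤ a))
    (by gcongr; exact_mod_cast (by omega : a + 1 ≤ d))

def dyadicInterval (t a : ℤ) : Set ℝ :=
  Icc ((2 : ℝ) ^ (-t) * a) ((2 : ℝ) ^ (-t) * (a + 1))

namespace dyadicInterval

variable {s t a b : ℤ}

lemma left_le_right (t a : ℤ) : (2 : ℝ) ^ (-t) * a ≤ (2 : ℝ) ^ (-t) * (a + 1) := by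
  gcongr; linarith

lemma nonempty (t a : ℤ) : (dyadicInterval t a).Nonempty :=
  nonempty_Icc.2 (left_le_right t a)

lemma floor_mem (t : ℤ) (x : ℝ) : x ∈ dyadicInterval t ⌊(2 : ℝ) ^ t * x⌋ := by
  have h2t : (0 : ℝ) < 2 ^ t := by positivity
  rw [dyadicInterval, zpow_neg, mem_Icc, inv_mul_le_iff₀ h2t, le_inv_mul_iff₀ h2t]
  exact ⟨Int.floor_le _, (Int.lt_floor_add_one _).le⟩

lemma interior_eq (t a : ℤ) :
    interior (dyadicInterval t a) = Ioo ((2 : ℝ) ^ (-t) * a) ((2 : ℝ) ^ (-t) * (a + 1)) :=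
  interior_Icc

lemma subset_of_mem_interior (hst : s ≤ t) {x : ℝ} (hx : x ∈ interior (dyadicInterval t a))
    (hx' : x ∈ interior (dyadicInterval s b)) : dyadicInterval t a ⊆ dyadicInterval s b := by
  obtain ⟨m, rfl⟩ : ∃ m : ℕ, t = s + m := ⟨(t - s).toNat, by omega⟩
  -- on the finer grid the coarser interval has the integer endpoints `2ᵐ b` and `2ᵐ (b + 1)`
  have hscale : (2 : ℝ) ^ (-s) = 2 ^ (-(s + m : ℤ)) * 2 ^ m := by
    rw [← zpow_natCast, ← zpow_add₀ two_ne_zero]; ring_nf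
  have hleft : (2 : ℝ) ^ (-s) * b = 2 ^ (-(s + m : ℤ)) * ((2 ^ m * b : ℤ) : ℝ) := by
    push_cast; rw [hscale]; ring
  have hright : (2 : ℝ) ^ (-s) * (b + 1) = 2 ^ (-(s + m : ℤ)) * ((2 ^ m * (b + 1) : ℤ) : ℝ) := by
    push_cast; rw [hscale]; ring
  rw [interior_eq] at hx hx'
  rw [hleft, hright] at hx'
  rw [dyadicInterval, dyadicInterval, hleft, hright]
  exact Icc_mul_subset_Icc_mul_of_mem_Ioo (by positivity) hx hx'

lemma le_of_subset (h : dyadicInterval t a ⊆ dyadicInterval s b) : s ≤ t := by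
  rw [dyadicInterval, dyadicInterval, Icc_subset_Icc_iff (left_le_right t a)] at h
  have hlen : (2 : ℝ) ^ (-t) ≤ 2 ^ (-s) := by nlinarith
  have := (zpow_le_zpow_iff_right₀ one_lt_two).1 hlen
  omega

lemma eq_of_subset (h : dyadicInterval t a ⊆ dyadicInterval t b) : a = b := by
  rw [dyadicInterval, dyadicInterval, Icc_subset_Icc_iff (left_le_right t a)] at h
  have h2t : (0 : ℝ) < 2 ^ (-t) := by positivity
  have hba : (b : ℝ) ≤ a := le_of_mul_le_mul_left h.1 h2t
  have hab : (a : ℝ) + 1 ≤ b + 1 := le_of_mul_le_mul_left h.2 h2t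
  exact_mod_cast le_antisymm (by linarith) hba

end dyadicInterval

def dyadicCell (n : ℕ) (t : ℤ) (a : Fin n → ℤ) : Set (Fin n → ℝ) :=
  univ.pi fun k => dyadicInterval t (a k)

lemma isDyadicCell_iff {n : ℕ} {x : Set (Fin n → ℝ)} :
    IsDyadicCell n x ↔ ∃ t a, x = dyadicCell n t a :=
  Iff.rfl

namespace dyadicCell

variable {n : ℕ} {s t : ℤ} {a b : Fin n → ℤ} {p : Fin n → ℝ}

lemma mem_iff : p ∈ dyadicCell n t a ↔ ∀ k, p k ∈ dyadicInterval t (a k) :=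
  mem_univ_pi

lemma floor_mem (t : ℤ) (p : Fin n → ℝ) :
    p ∈ dyadicCell n t fun k => ⌊(2 : ℝ) ^ t * p k⌋ :=
  mem_iff.2 fun k => dyadicInterval.floor_mem t (p k)

lemma isBounded (t : ℤ) (a : Fin n → ℤ) : Bornology.IsBounded (dyadicCell n t a) :=
  (isCompact_univ_pi fun _ => isCompact_Icc).isBounded

lemma diam_eq (hn : 0 < n) (t : ℤ) (a : Fin n → ℤ) :
    diam (dyadicCell n t a) = (2 : ℝ) ^ (-t) := by
  have h2t : (0 : ℝ) < 2 ^ (-t) := by positivity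
  refine le_antisymm (diam_le_of_forall_dist_le h2t.le fun x hx y hy => ?_) ?_
  · refine (dist_pi_le_iff h2t.le).2 fun k => ?_
    calc dist (x k) (y k) ≤ 2 ^ (-t) * (a k + 1) - 2 ^ (-t) * a k :=
          Real.dist_le_of_mem_Icc (mem_iff.1 hx k) (mem_iff.1 hy k)
      _ = 2 ^ (-t) := by ring
  · let lower : Fin n → ℝ := fun k => 2 ^ (-t) * a k
    let upper : Fin n → ℝ := fun k => 2 ^ (-t) * (a k + 1)
    have hlower : lower ∈ dyadicCell n t a :=
      mem_iff.2 fun k => left_mem_Icc.2 (dyadicInterval.left_le_right t (a k))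
    have hupper : upper ∈ dyadicCell n t a :=
      mem_iff.2 fun k => right_mem_Icc.2 (dyadicInterval.left_le_right t (a k))
    calc (2 : ℝ) ^ (-t) = dist (lower ⟨0, hn⟩) (upper ⟨0, hn⟩) := by
          rw [Real.dist_eq, abs_sub_comm, abs_of_nonneg] <;>
            simp only [lower, upper, mul_add, mul_one, add_sub_cancel_left, h2t.le]
      _ ≤ dist lower upper := dist_le_pi_dist lower upper _
      _ ≤ diam (dyadicCell n t a) := dist_le_diam_of_mem (isBounded t a) hlower hupper

lemma subset_iff : dyadicCell n t a ⊆ dyadicCell n s b ↔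
    ∀ k, dyadicInterval t (a k) ⊆ dyadicInterval s (b k) := by
  refine univ_pi_subset_univ_pi_iff.trans (or_iff_left ?_)
  rintro ⟨k, hk⟩
  exact (dyadicInterval.nonempty t (a k)).ne_empty hk

lemma subset_of_mem_interior (hst : s ≤ t) (hp : p ∈ interior (dyadicCell n t a))
    (hp' : p ∈ interior (dyadicCell n s b)) : dyadicCell n t a ⊆ dyadicCell n s b := by
  rw [dyadicCell, interior_pi_set finite_univ, mem_univ_pi] at hp hp'
  exact subset_iff.2 fun k => dyadicInterval.subset_of_mem_interior hst (hp k) (hp' k)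

lemma le_of_subset (hn : 0 < n) (h : dyadicCell n t a ⊆ dyadicCell n s b) : s ≤ t :=
  dyadicInterval.le_of_subset (subset_iff.1 h ⟨0, hn⟩)

lemma eq_of_subset (h : dyadicCell n t a ⊆ dyadicCell n t b) : a = b :=
  funext fun k => dyadicInterval.eq_of_subset (subset_iff.1 h k)

end dyadicCell

section Whitney

variable {n : ℕ} {U : Set (Fin n → ℝ)} {ε : ℝ} {x y : Set (Fin n → ℝ)} {p : Fin n → ℝ}

lemma IsDyadicCell.isBounded (hx : IsDyadicCell n x) : Bornology.IsBounded x := by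
  obtain ⟨t, a, rfl⟩ := isDyadicCell_iff.1 hx
  exact dyadicCell.isBounded t a

lemma IsSmallCell.subset (hx : IsSmallCell U ε x) : x ⊆ U :=
  fun p hp => hx.2.2 x hx.1 rfl ⟨p, hp, hp⟩ hp

lemma isSmallCell_of_closedBall_subset (hx : IsDyadicCell n x) (hxε : diam x ≤ ε) (hp : p ∈ x)
    (hU : closedBall p (2 * diam x) ⊆ U) : IsSmallCell U ε x := by
  refine ⟨hx, hxε, fun y hy hyx ⟨q, hqx, hqy⟩ w hw => hU ?_⟩
  rw [mem_closedBall]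
  calc dist w p ≤ dist w q + dist q p := dist_triangle w q p
    _ ≤ diam y + diam x :=
        add_le_add (dist_le_diam_of_mem hy.isBounded hw hqy)
          (dist_le_diam_of_mem hx.isBounded hqx hp)
    _ = 2 * diam x := by rw [hyx]; ring

lemma exists_isSmallCell_mem (hn : 0 < n) (hU : IsOpen U) (hε : 0 < ε) (hp : p ∈ U) :
    ∃ t a, p ∈ dyadicCell n t a ∧ IsSmallCell U ε (dyadicCell n t a) := by
  obtain ⟨r, hr, hball⟩ := isOpen_iff.1 hU p hp
  obtain ⟨m, hm, -⟩ := exists_mem_Ico_zpow (lt_min hε (by positivity : 0 < r / 4)) one_lt_two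
  have hdiam : diam (dyadicCell n (-m) fun k => ⌊(2 : ℝ) ^ (-m) * p k⌋) = 2 ^ m := by
    rw [dyadicCell.diam_eq hn, neg_neg]
  refine ⟨-m, _, dyadicCell.floor_mem (-m) p, isSmallCell_of_closedBall_subset ⟨_, _, rfl⟩ ?_
    (dyadicCell.floor_mem (-m) p) ((closedBall_subset_ball ?_).trans hball)⟩
  · exact hdiam ▸ hm.trans (min_le_left _ _)
  · linarith [hdiam ▸ hm.trans (min_le_right _ _)]

lemma exists_forall_le_of_isSmallCell (hn : 0 < n) (hε : 0 < ε) :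
    ∃ t₀ : ℤ, ∀ t a, IsSmallCell U ε (dyadicCell n t a) → t₀ ≤ t := by
  obtain ⟨m, -, hm⟩ := exists_mem_Ico_zpow hε one_lt_two
  refine ⟨-m, fun t a hx => ?_⟩
  have hlt : (2 : ℝ) ^ (-t) < 2 ^ (m + 1) := (dyadicCell.diam_eq hn t a ▸ hx.2.1).trans_lt hm
  have := (zpow_lt_zpow_iff_right₀ one_lt_two).1 hlt
  omega

lemma exists_isGoodCell_mem (hn : 0 < n) (hU : IsOpen U) (hε : 0 < ε) (hp : p ∈ U) :
    ∃ x, IsGoodCell U ε x ∧ p ∈ x := by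
  obtain ⟨t₀, hbound⟩ := exists_forall_le_of_isSmallCell (U := U) hn hε
  obtain ⟨t, ⟨a, hpa, ha⟩, hleast⟩ := Int.exists_least_of_bdd
    (P := fun t => ∃ a, p ∈ dyadicCell n t a ∧ IsSmallCell U ε (dyadicCell n t a))
    ⟨t₀, fun t ⟨a, _, ha⟩ => hbound t a ha⟩ (exists_isSmallCell_mem hn hU hε hp)
  refine ⟨_, ⟨ha, fun y hy hsub => ?_⟩, hpa⟩
  obtain ⟨s, b, rfl⟩ := isDyadicCell_iff.1 hy.1
  obtain rfl : s = t :=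
    le_antisymm (dyadicCell.le_of_subset hn hsub) (hleast s ⟨b, hsub hpa, hy⟩)
  rw [dyadicCell.eq_of_subset hsub]

lemma IsGoodCell.eq_of_interior_inter_nonempty (hx : IsGoodCell U ε x) (hy : IsGoodCell U ε y)
    (hxy : (interior x ∩ interior y).Nonempty) : x = y := by
  obtain ⟨p, hpx, hpy⟩ := hxy
  obtain ⟨t, a, rfl⟩ := isDyadicCell_iff.1 hx.1.1
  obtain ⟨s, b, rfl⟩ := isDyadicCell_iff.1 hy.1.1
  rcases le_total s t with hst | hts
  · exact (hx.2 _ hy.1 (dyadicCell.subset_of_mem_interior hst hpx hpy)).symm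
  · exact hy.2 _ hx.1 (dyadicCell.subset_of_mem_interior hts hpy hpx)

end Whitney

theorem stmt11 (n : ℕ) (U : Set (Fin n → ℝ)) (hU : IsOpen U)
    (hne : U.Nonempty) (hproper : U ≠ Set.univ) (ε : ℝ) (hε : 0 < ε) :
    (∀ x y : Set (Fin n → ℝ), IsGoodCell U ε x → IsGoodCell U ε y → x ≠ y →
      interior x ∩ interior y = ∅) ∧
    ⋃₀ {x | IsGoodCell U ε x} = U := by
  have hn : 0 < n := Nat.pos_of_ne_zero fun h => hproper <| by
    subst h
    exact Subsingleton.eq_univ_of_nonempty hne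
  refine ⟨fun x y hx hy hxy => not_nonempty_iff_eq_empty.1 fun h =>
    hxy (hx.eq_of_interior_inter_nonempty hy h), ?_⟩
  refine subset_antisymm (sUnion_subset fun x hx => hx.1.subset) fun p hp => ?_
  obtain ⟨x, hx, hpx⟩ := exists_isGoodCell_mem hn hU hε hp
  exact ⟨x, hx, hpx⟩
end
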